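/- Let k ≥ 1, n ≥ 2, and C = (c_0,…,c_k) ∈ {0,1}^{k+1} with c_0 = 0. Set λ = ∑_{j=2}^{n} F_j(C) and, for a positive integer M_1, set M = ⌈e·λ⌉ + M_1. Then ∑_{m=M+1}^{n} O^u_C(n, m) ≤ n!^k · exp(−M_1). -/

import Mathlib

/-- `F j C = ∑_{β=0}^{k} C(k,β) · c_β / (j−1)^β`. -/
def F (k : ℕ) (C : ℕ → ℕ) (j : ℕ) : ℚ :=
  ∑ β ∈ Finset.range (k + 1), (k.choose β : ℚ) * (C β : ℚ) / ((j : ℚ) - 1) ^ β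

/-- The unsigned `C` sequential optimization numbers `O^u_C(n, m)`. -/
def Ou (k : ℕ) (C : ℕ → ℕ) (n : ℕ) (m : ℤ) : ℚ :=
  if 1 ≤ m ∧ m ≤ (n : ℤ) then
    ((n - 1).factorial : ℚ) ^ k *
      ∑ S ∈ (Finset.Icc 2 n).powersetCard (m.toNat - 1),
        (∏ j ∈ S, F k C j) * ∏ j ∈ Finset.Icc 2 n \ S, F k (fun β => 1 - C β) j
  else 0

/-- The `C` sequential optimization numbers `O_C(n, m) = O^u_C(n, m − c_k + 1)`. -/
def Oc (k : ℕ) (C : ℕ → ℕ) (n : ℕ) (m : ℤ) : ℚ :=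
  Ou k C n (m - C k + 1)

lemma F_nonneg (k : ℕ) (C : ℕ → ℕ) (j : ℕ) (hj : 2 ≤ j) : 0 ≤ F k C j := by
  apply Finset.sum_nonneg
  intro β _
  have h2 : (2:ℚ) ≤ (j:ℚ) := by exact_mod_cast hj
  have h1 : (0:ℚ) < (j:ℚ) - 1 := by linarith
  positivity

lemma F_add_F (k : ℕ) (C : ℕ → ℕ) (hC : ∀ β ≤ k, C β ≤ 1) (j : ℕ) (hj : 2 ≤ j) :
    F k C j + F k (fun β => 1 - C β) j = ((j:ℚ)/((j:ℚ)-1))^k := by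
  have h2 : (2:ℚ) ≤ (j:ℚ) := by exact_mod_cast hj
  have hx : (0:ℚ) < (j:ℚ) - 1 := by linarith
  unfold F
  rw [← Finset.sum_add_distrib]
  have hterm : ∀ β ∈ Finset.range (k+1),
      (k.choose β : ℚ) * (C β : ℚ) / ((j:ℚ)-1)^β
        + (k.choose β : ℚ) * (((fun β => 1 - C β) β : ℕ) : ℚ) / ((j:ℚ)-1)^β
        = (1/((j:ℚ)-1))^β * 1^(k-β) * (k.choose β : ℚ) := by
    intro β hβ
    have hβk : β ≤ k := Nat.lt_succ_iff.mp (Finset.mem_range.mp hβ)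
    have hc := hC β hβk
    have hcast : ((1 - C β : ℕ) : ℚ) = 1 - (C β : ℚ) := by
      rw [Nat.cast_sub hc]; norm_num
    simp only [hcast]
    have hxne : ((j:ℚ)-1) ≠ 0 := ne_of_gt hx
    rw [one_pow, mul_one, one_div, inv_pow, ← add_div, div_eq_inv_mul]
    congr 1
    ring
  rw [Finset.sum_congr rfl hterm, ← add_pow]
  congr 1
  field_simp
  ring

lemma prod_telescope (n : ℕ) (hn : 1 ≤ n) :
    ∏ j ∈ Finset.Icc 2 n, ((j:ℝ)/((j:ℝ)-1)) = (n:ℝ) := by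
  induction n, hn using Nat.le_induction with
  | base => rw [Finset.Icc_eq_empty (by omega)]; simp
  | succ n hn ih =>
    rw [Finset.prod_Icc_succ_top (by omega : 2 ≤ n + 1), ih]
    have hn' : (1:ℝ) ≤ (n:ℝ) := by exact_mod_cast hn
    have hne : (n:ℝ) ≠ 0 := by linarith
    push_cast
    field_simp
    rw [add_sub_cancel_right, div_self hne]

theorem stmt13 (k n : ℕ) (hk : 1 ≤ k) (hn : 2 ≤ n)
    (C : ℕ → ℕ) (hC : ∀ β ≤ k, C β ≤ 1) (hC0 : C 0 = 0)
    (M₁ : ℕ) (hM₁ : 1 ≤ M₁) (M : ℕ)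
    (hM : M = ⌈Real.exp 1 * ((∑ j ∈ Finset.Icc 2 n, F k C j : ℚ) : ℝ)⌉₊ + M₁) :
    ((∑ m ∈ Finset.Icc (M + 1) n, Ou k C n (m : ℤ) : ℚ) : ℝ)
      ≤ (n.factorial : ℝ) ^ k * Real.exp (-(M₁ : ℝ)) := by
  classical
  set I := Finset.Icc 2 n with hI
  set e : ℝ := Real.exp 1 with he
  have he1 : (1:ℝ) ≤ e := Real.one_le_exp (by norm_num)
  set A : ℕ → ℝ := fun j => ((F k C j : ℚ) : ℝ) with hA
  set B : ℕ → ℝ := fun j => ((F k (fun β => 1 - C β) j : ℚ) : ℝ) with hB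
  have hAnn : ∀ j ∈ I, 0 ≤ A j := by
    intro j hj
    simp only [hA]
    exact_mod_cast F_nonneg k C j (Finset.mem_Icc.mp hj).1
  have hBnn : ∀ j ∈ I, 0 ≤ B j := by
    intro j hj
    simp only [hB]
    exact_mod_cast F_nonneg k (fun β => 1 - C β) j (Finset.mem_Icc.mp hj).1
  have hABj : ∀ j ∈ I, A j + B j = (((j:ℝ))/((j:ℝ)-1))^k := by
    intro j hj
    have hj2 : 2 ≤ j := (Finset.mem_Icc.mp hj).1
    have h0 := F_add_F k C hC j hj2
    have hcast := congrArg (fun q : ℚ => (q : ℝ)) h0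
    push_cast at hcast
    simp only [hA, hB]
    push_cast
    exact hcast
  have hAB1 : ∀ j ∈ I, 1 ≤ A j + B j := by
    intro j hj
    rw [hABj j hj]
    have hj2 : 2 ≤ j := (Finset.mem_Icc.mp hj).1
    have h2 : (2:ℝ) ≤ (j:ℝ) := by exact_mod_cast hj2
    have hx : (0:ℝ) < (j:ℝ) - 1 := by linarith
    apply one_le_pow₀
    rw [le_div_iff₀ hx]; linarith
  set lam : ℝ := ∑ j ∈ I, A j with hlam
  have hlam0 : 0 ≤ lam := Finset.sum_nonneg hAnn
  have hlamcast : ((∑ j ∈ I, F k C j : ℚ) : ℝ) = lam := by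
    rw [hlam]; simp only [hA]; push_cast; rfl
  have hM1le : M₁ ≤ M := by rw [hM]; omega
  have hMe : e * lam + (M₁:ℝ) ≤ (M:ℝ) := by
    rw [hM]; push_cast
    have := Nat.le_ceil (e * ((∑ j ∈ I, F k C j : ℚ) : ℝ))
    rw [hlamcast] at this
    linarith
  have hcard : I.card = n - 1 := by rw [hI, Nat.card_Icc]; omega
  -- f and g
  set f : Finset ℕ → ℝ := fun S => (∏ j ∈ S, A j) * ∏ j ∈ I \ S, B j with hf
  set g : Finset ℕ → ℝ := fun S => (∏ j ∈ S, e * A j) * ∏ j ∈ I \ S, B j with hg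
  have hfnn : ∀ S ⊆ I, 0 ≤ f S := by
    intro S hS
    apply mul_nonneg
    · exact Finset.prod_nonneg fun j hj => hAnn j (hS hj)
    · exact Finset.prod_nonneg fun j hj => hBnn j (Finset.mem_sdiff.mp hj).1
  have hgf : ∀ S : Finset ℕ, g S = Real.exp S.card * f S := by
    intro S
    rw [hg, hf]
    simp only [Finset.prod_mul_distrib, Finset.prod_const]
    rw [he, Real.exp_one_pow]
    ring
  have hgnn : ∀ S ⊆ I, 0 ≤ g S := by
    intro S hS
    rw [hgf]
    exact mul_nonneg (le_of_lt (Real.exp_pos _)) (hfnn S hS)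
  -- rewrite LHS
  have hOu : ∀ m ∈ Finset.Icc (M+1) n, ((Ou k C n (m:ℤ) : ℚ) : ℝ)
      = ((n-1).factorial : ℝ)^k * ∑ S ∈ I.powersetCard (m-1), f S := by
    intro m hm
    obtain ⟨hm1, hm2⟩ := Finset.mem_Icc.mp hm
    have h1m : 1 ≤ m := by omega
    rw [Ou, if_pos ⟨by exact_mod_cast h1m, by exact_mod_cast hm2⟩]
    push_cast
    simp only [Int.toNat_natCast]
    rfl
  rw [Rat.cast_sum]
  calc ∑ m ∈ Finset.Icc (M+1) n, ((Ou k C n (m:ℤ) : ℚ) : ℝ)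
      = ((n-1).factorial : ℝ)^k * ∑ m ∈ Finset.Icc (M+1) n, ∑ S ∈ I.powersetCard (m-1), f S := by
        rw [Finset.mul_sum]
        exact Finset.sum_congr rfl hOu
    _ ≤ ((n-1).factorial : ℝ)^k *
          (Real.exp (-(M:ℝ)) * ∑ S ∈ I.powerset, g S) := by
        apply mul_le_mul_of_nonneg_left _ (by positivity)
        have step1 : ∀ m ∈ Finset.Icc (M+1) n,
            ∑ S ∈ I.powersetCard (m-1), f S
              ≤ Real.exp (-(M:ℝ)) * ∑ S ∈ I.powersetCard (m-1), g S := by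
          intro m hm
          obtain ⟨hm1, hm2⟩ := Finset.mem_Icc.mp hm
          rw [Finset.mul_sum]
          apply Finset.sum_le_sum
          intro S hS
          obtain ⟨hSsub, hScard⟩ := Finset.mem_powersetCard.mp hS
          rw [hgf S, hScard]
          have hcardge : (M:ℝ) ≤ ((m-1 : ℕ):ℝ) := by
            have : M ≤ m - 1 := by omega
            exact_mod_cast this
          have h1 : (1:ℝ) ≤ Real.exp (-(M:ℝ)) * Real.exp ((m-1:ℕ):ℝ) := by
            rw [← Real.exp_add]
            apply Real.one_le_exp
            linarith
          calc f S = 1 * f S := (one_mul _).symm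
            _ ≤ (Real.exp (-(M:ℝ)) * Real.exp ((m-1:ℕ):ℝ)) * f S :=
                mul_le_mul_of_nonneg_right h1 (hfnn S hSsub)
            _ = Real.exp (-(M:ℝ)) * (Real.exp ((m-1:ℕ):ℝ) * f S) := by ring
        calc ∑ m ∈ Finset.Icc (M+1) n, ∑ S ∈ I.powersetCard (m-1), f S
            ≤ ∑ m ∈ Finset.Icc (M+1) n, Real.exp (-(M:ℝ)) * ∑ S ∈ I.powersetCard (m-1), g S :=
              Finset.sum_le_sum step1
          _ = Real.exp (-(M:ℝ)) * ∑ m ∈ Finset.Icc (M+1) n, ∑ S ∈ I.powersetCard (m-1), g S := by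
              rw [Finset.mul_sum]
          _ ≤ Real.exp (-(M:ℝ)) * ∑ S ∈ I.powerset, g S := by
              apply mul_le_mul_of_nonneg_left _ (le_of_lt (Real.exp_pos _))
              have hre : ∑ m ∈ Finset.Icc (M+1) n, ∑ S ∈ I.powersetCard (m-1), g S
                  = ∑ c ∈ Finset.Icc M (n-1), ∑ S ∈ I.powersetCard c, g S := by
                apply Finset.sum_nbij' (fun m => m - 1) (fun c => c + 1)
                · intro a ha; simp only [Finset.mem_Icc] at *; omega
                · intro a ha; simp only [Finset.mem_Icc] at *; omega
                · intro a ha; simp only [Finset.mem_Icc] at *; omega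
                · intro a ha; simp only [Finset.mem_Icc] at *; omega
                · intro a ha; rfl
              rw [hre, Finset.sum_powerset]
              apply Finset.sum_le_sum_of_subset_of_nonneg
              · intro c hc
                simp only [Finset.mem_Icc] at hc
                simp only [Finset.mem_range, hcard]
                omega
              · intro c _ _
                apply Finset.sum_nonneg
                intro S hS
                exact hgnn S (Finset.mem_powersetCard.mp hS).1
    _ = ((n-1).factorial : ℝ)^k * (Real.exp (-(M:ℝ)) * ∏ j ∈ I, (e * A j + B j)) := by
        rw [Finset.prod_add]
    _ ≤ ((n-1).factorial : ℝ)^k *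
          (Real.exp (-(M:ℝ)) * ((∏ j ∈ I, (A j + B j)) * Real.exp ((e-1) * lam))) := by
        apply mul_le_mul_of_nonneg_left _ (by positivity)
        apply mul_le_mul_of_nonneg_left _ (le_of_lt (Real.exp_pos _))
        have hpt : ∀ j ∈ I, e * A j + B j ≤ (A j + B j) * Real.exp ((e-1) * A j) := by
          intro j hj
          have hAj := hAnn j hj
          have hBj := hBnn j hj
          have h1 := hAB1 j hj
          have h2 : (e-1) * A j + 1 ≤ Real.exp ((e-1) * A j) := Real.add_one_le_exp _
          have h3 : e * A j + B j ≤ (A j + B j) * ((e-1) * A j + 1) := by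
            have hpos : 0 ≤ (e-1) * A j * (A j + B j - 1) :=
              mul_nonneg (mul_nonneg (by linarith) hAj) (by linarith)
            nlinarith [hpos]
          calc e * A j + B j ≤ (A j + B j) * ((e-1) * A j + 1) := h3
            _ ≤ (A j + B j) * Real.exp ((e-1) * A j) := by nlinarith
        calc ∏ j ∈ I, (e * A j + B j)
            ≤ ∏ j ∈ I, (A j + B j) * Real.exp ((e-1) * A j) := by
              apply Finset.prod_le_prod
              · intro j hj
                have := hAnn j hj; have := hBnn j hj; nlinarith
              · exact hpt
          _ = (∏ j ∈ I, (A j + B j)) * Real.exp ((e-1) * lam) := by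
              rw [Finset.prod_mul_distrib, hlam, Finset.mul_sum, Real.exp_sum]
    _ = ((n.factorial : ℝ))^k * Real.exp ((e-1) * lam - (M:ℝ)) := by
        have hprod : ∏ j ∈ I, (A j + B j) = ((n:ℝ))^k := by
          rw [Finset.prod_congr rfl hABj, Finset.prod_pow,
            prod_telescope n (by omega)]
        have hfactn : n.factorial = n * (n-1).factorial := by
          conv_lhs => rw [show n = (n-1)+1 by omega]
          rw [Nat.factorial_succ]
          congr 1
          omega
        have hfact : (n.factorial : ℝ) = (n:ℝ) * ((n-1).factorial : ℝ) := by
          rw [hfactn]; push_cast; ring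
        have hexp : Real.exp ((e-1) * lam - (M:ℝ))
            = Real.exp (-(M:ℝ)) * Real.exp ((e-1) * lam) := by
          rw [← Real.exp_add]; ring_nf
        rw [hprod, hfact, mul_pow, hexp]
        ring
    _ ≤ ((n.factorial : ℝ))^k * Real.exp (-(M₁:ℝ)) := by
        apply mul_le_mul_of_nonneg_left _ (by positivity)
        apply Real.exp_le_exp.mpr
        have : (e-1) * lam = e * lam - lam := by ring
        linarith
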